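/- arXiv:2603.00806 — 4 statements merged into one kernel-verified Lean document; each statement's English description precedes it below -/
import Mathlib

section
/- For κ > -1, the series z_κ(φ) = Σ_{n≥0} (n+1)^κ φ^n converges for every φ ∈ [0,1) and diverges to infinity as φ ↗ 1; moreover z_κ(φ) · (1-φ)^{κ+1} → Γ(κ+1) as φ ↗ 1. -/
/-!
Put `φ = exp (-t)` and `g x = x ^ κ * exp (-x)`. Then `t ^ (κ + 1) * exp (-t) * z_κ (exp (-t))`
is the right Riemann sum `∑ₙ t * g (t * (n + 1))` (right endpoints, so `0 ^ κ` never occurs),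
i.e. the integral over `(0, ∞)` of the step function `x ↦ g (t * ⌈x / t⌉₊)`. As `t → 0⁺` these
step functions tend to `g` pointwise and, for `t ≤ 1`, are dominated by `g x + e * g (x + 1)`,
so the Riemann sums tend to `∫ g = Γ(κ + 1)`. Since `-log φ ∼ 1 - φ` as `φ → 1⁻`, this is the
asymptotics; divergence follows from `Γ(κ + 1) > 0`.
-/

open Real Filter Set

/-- `z_κ(φ) = Σ_{n≥0} (n+1)^κ φ^n`. -/
noncomputable def zk (κ φ : ℝ) : ℝ := ∑' n : ℕ, ((n : ℝ) + 1) ^ κ * φ ^ n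

open MeasureTheory Topology

theorem summable_succ_rpow_mul_geometric (κ : ℝ) {φ : ℝ} (hφ0 : 0 ≤ φ) (hφ1 : φ < 1) :
    Summable fun n : ℕ => ((n : ℝ) + 1) ^ κ * φ ^ n := by
  have hnat : Summable fun n : ℕ => ((n : ℝ) + 1) ^ ⌈κ⌉₊ * φ ^ n := by
    rcases hφ0.eq_or_lt with rfl | hφ
    · refine summable_of_ne_finset_zero (s := {0}) fun n hn => ?_
      rw [Finset.mem_singleton] at hn
      rw [zero_pow hn, mul_zero]
    have h := (summable_nat_add_iff 1).2 (summable_pow_mul_geometric_of_norm_lt_one (R := ℝ) ⌈κ⌉₊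
      (by rwa [norm_of_nonneg hφ0] : ‖φ‖ < 1))
    refine (h.mul_left φ⁻¹).congr fun n => ?_
    rw [Nat.cast_succ, pow_succ]
    field_simp
  refine hnat.of_nonneg_of_le (fun n => by positivity) fun n => ?_
  gcongr
  rw [← rpow_natCast]
  exact rpow_le_rpow_of_exponent_le (le_add_of_nonneg_left n.cast_nonneg) (Nat.le_ceil κ)

theorem le_mul_natCeil_div {t : ℝ} (ht : 0 < t) (x : ℝ) : x ≤ t * ⌈x / t⌉₊ := by
  rw [← div_le_iff₀' ht]
  exact Nat.le_ceil _

theorem mul_natCeil_div_lt {t x : ℝ} (ht : 0 < t) (hx : 0 ≤ x) : t * ⌈x / t⌉₊ < x + t :=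
  calc t * ⌈x / t⌉₊ < t * (x / t + 1) := by gcongr; exact Nat.ceil_lt_add_one (by positivity)
    _ = x + t := by field_simp

theorem tendsto_mul_natCeil_div_nhdsGT_zero {x : ℝ} (hx : 0 ≤ x) :
    Tendsto (fun t => t * (⌈x / t⌉₊ : ℝ)) (𝓝[>] 0) (𝓝 x) := by
  have hupper : Tendsto (fun t => x + t) (𝓝[>] 0) (𝓝 x) :=
    tendsto_nhdsWithin_of_tendsto_nhds (by simpa using (continuous_const_add x).tendsto 0)
  refine tendsto_of_tendsto_of_tendsto_of_le_of_le' tendsto_const_nhds hupper ?_ ?_ <;>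
    filter_upwards [self_mem_nhdsWithin] with t ht
  exacts [le_mul_natCeil_div ht x, (mul_natCeil_div_lt ht hx).le]

theorem mem_Ioc_mul_iff_natCeil_div {t x : ℝ} (ht : 0 < t) (n : ℕ) :
    x ∈ Ioc (t * n) (t * (n + 1)) ↔ ⌈x / t⌉₊ = n + 1 := by
  rw [Nat.ceil_eq_iff n.succ_ne_zero, mem_Ioc, lt_div_iff₀ ht, div_le_iff₀ ht]
  push_cast
  simp only [mul_comm t]

theorem hasSum_integral_comp_natCeil_div {E : Type*} [NormedAddCommGroup E] [NormedSpace ℝ E]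
    [CompleteSpace E] (c : ℕ → E) {t : ℝ} (ht : 0 < t)
    (hc : IntegrableOn (fun x => c ⌈x / t⌉₊) (Ioi 0)) :
    HasSum (fun n : ℕ => t • c (n + 1)) (∫ x in Ioi 0, c ⌈x / t⌉₊) := by
  have hunion : ⋃ n : ℕ, Ioc (t * n) (t * (n + 1)) = Ioi 0 := by
    ext x
    simp only [mem_iUnion, mem_Ioc_mul_iff_natCeil_div ht, mem_Ioi]
    refine ⟨fun ⟨n, hn⟩ => ?_, fun hx => ⟨⌈x / t⌉₊ - 1, ?_⟩⟩
    · have : 0 < ⌈x / t⌉₊ := by omega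
      exact (div_pos_iff_of_pos_right ht).1 (Nat.ceil_pos.1 this)
    · have : 0 < ⌈x / t⌉₊ := Nat.ceil_pos.2 (div_pos hx ht)
      omega
  have hdisj : Pairwise (Function.onFun Disjoint fun n : ℕ => Ioc (t * n) (t * (n + 1))) :=
    fun m n hmn => Set.disjoint_left.2 fun x hm hn => hmn <| by
      rw [mem_Ioc_mul_iff_natCeil_div ht] at hm hn
      omega
  have hpiece (n : ℕ) : ∫ x in Ioc (t * n) (t * (n + 1)), c ⌈x / t⌉₊ = t • c (n + 1) := by
    rw [setIntegral_congr_fun measurableSet_Ioc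
      (fun x hx => congrArg c ((mem_Ioc_mul_iff_natCeil_div ht n).1 hx)),
      setIntegral_const, Real.volume_real_Ioc_of_le (by gcongr; linarith)]
    ring_nf
  rw [← hunion] at hc ⊢
  simpa only [hpiece] using hasSum_integral_iUnion (fun _ => measurableSet_Ioc) hdisj hc

noncomputable def gammaIntegrand (κ x : ℝ) : ℝ := x ^ κ * exp (-x)

section

variable {κ : ℝ}

theorem gammaIntegrand_nonneg {x : ℝ} (hx : 0 ≤ x) : 0 ≤ gammaIntegrand κ x := by
  unfold gammaIntegrand; positivity

theorem measurable_gammaIntegrand : Measurable (gammaIntegrand κ) := by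
  unfold gammaIntegrand; fun_prop

theorem continuousAt_gammaIntegrand {x : ℝ} (hx : 0 < x) : ContinuousAt (gammaIntegrand κ) x :=
  (continuousAt_rpow_const x κ (Or.inl hx.ne')).mul (by fun_prop)

theorem integrableOn_gammaIntegrand (hκ : -1 < κ) : IntegrableOn (gammaIntegrand κ) (Ioi 0) := by
  have h := GammaIntegral_convergent (s := κ + 1) (by linarith)
  simp only [add_sub_cancel_right, mul_comm (exp _)] at h
  exact h

theorem integral_gammaIntegrand (hκ : -1 < κ) :
    ∫ x in Ioi 0, gammaIntegrand κ x = Gamma (κ + 1) := by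
  simp only [Gamma_eq_integral (by linarith : 0 < κ + 1), add_sub_cancel_right, gammaIntegrand,
    mul_comm (exp _)]

theorem integrableOn_gammaIntegrand_add_one (hκ : -1 < κ) :
    IntegrableOn (fun x => gammaIntegrand κ (x + 1)) (Ioi 0) := by
  have h := (integrableOn_gammaIntegrand hκ).mono_set (Ioi_subset_Ioi zero_le_one)
  rw [← (measurePreserving_add_right volume 1).integrableOn_comp_preimage
    (measurableEmbedding_addRight 1), preimage_add_const_Ioi, sub_self] at h
  exact h

theorem gammaIntegrand_le_of_mem_Icc {x y : ℝ} (hx : 0 < x) (hy : y ∈ Icc x (x + 1)) :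
    gammaIntegrand κ y ≤ gammaIntegrand κ x + exp 1 * gammaIntegrand κ (x + 1) := by
  have hexp : exp (-y) ≤ exp (-x) := exp_le_exp.2 (by linarith [hy.1])
  have hx1 : 0 ≤ gammaIntegrand κ x := gammaIntegrand_nonneg hx.le
  have hx2 : 0 ≤ exp 1 * gammaIntegrand κ (x + 1) := by
    have := gammaIntegrand_nonneg (κ := κ) (by linarith : 0 ≤ x + 1); positivity
  rcases le_or_gt κ 0 with hκ | hκ
  · have : gammaIntegrand κ y ≤ gammaIntegrand κ x :=
      mul_le_mul (rpow_le_rpow_of_nonpos hx hy.1 hκ) hexp (exp_nonneg _) (rpow_nonneg hx.le _)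
    linarith
  · have : gammaIntegrand κ y ≤ exp 1 * gammaIntegrand κ (x + 1) := by
      have h : exp 1 * gammaIntegrand κ (x + 1) = (x + 1) ^ κ * exp (-x) := by
        rw [gammaIntegrand, mul_left_comm, ← exp_add]; ring_nf
      rw [h, gammaIntegrand]
      gcongr
      exacts [(hx.trans_le hy.1).le, hy.2]
    linarith

theorem norm_gammaIntegrand_mul_natCeil_div_le {t x : ℝ} (ht : 0 < t) (ht1 : t ≤ 1) (hx : 0 < x) :
    ‖gammaIntegrand κ (t * ⌈x / t⌉₊)‖ ≤ gammaIntegrand κ x + exp 1 * gammaIntegrand κ (x + 1) := by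
  rw [norm_of_nonneg (gammaIntegrand_nonneg (by positivity))]
  exact gammaIntegrand_le_of_mem_Icc hx
    ⟨le_mul_natCeil_div ht x, by linarith [mul_natCeil_div_lt ht hx.le]⟩

theorem measurable_gammaIntegrand_mul_natCeil_div (t : ℝ) :
    Measurable fun x => gammaIntegrand κ (t * ⌈x / t⌉₊) :=
  measurable_gammaIntegrand.comp (measurable_const.mul
    (measurable_from_nat.comp (Nat.measurable_ceil.comp (measurable_id.div_const t))))

theorem integrableOn_gammaIntegrand_add_exp_one_mul (hκ : -1 < κ) :
    IntegrableOn (fun x => gammaIntegrand κ x + exp 1 * gammaIntegrand κ (x + 1)) (Ioi 0) :=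
  (integrableOn_gammaIntegrand hκ).add ((integrableOn_gammaIntegrand_add_one hκ).const_mul _)

theorem integrableOn_gammaIntegrand_mul_natCeil_div (hκ : -1 < κ) {t : ℝ} (ht : 0 < t)
    (ht1 : t ≤ 1) : IntegrableOn (fun x => gammaIntegrand κ (t * ⌈x / t⌉₊)) (Ioi 0) :=
  (integrableOn_gammaIntegrand_add_exp_one_mul hκ).mono'
    (measurable_gammaIntegrand_mul_natCeil_div t).aestronglyMeasurable
    (ae_restrict_of_forall_mem measurableSet_Ioi fun _ hx =>
      norm_gammaIntegrand_mul_natCeil_div_le ht ht1 hx)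

theorem tendsto_integral_gammaIntegrand_mul_natCeil_div (hκ : -1 < κ) :
    Tendsto (fun t => ∫ x in Ioi 0, gammaIntegrand κ (t * ⌈x / t⌉₊)) (𝓝[>] 0)
      (𝓝 (Gamma (κ + 1))) := by
  rw [← integral_gammaIntegrand hκ]
  refine tendsto_integral_filter_of_dominated_convergence _
    (Eventually.of_forall fun t =>
      (measurable_gammaIntegrand_mul_natCeil_div t).aestronglyMeasurable)
    ?_ (integrableOn_gammaIntegrand_add_exp_one_mul hκ) ?_
  · filter_upwards [Ioc_mem_nhdsGT zero_lt_one] with t ht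
    exact ae_restrict_of_forall_mem measurableSet_Ioi fun _ hx =>
      norm_gammaIntegrand_mul_natCeil_div_le ht.1 ht.2 hx
  · exact ae_restrict_of_forall_mem measurableSet_Ioi fun _ hx =>
      (continuousAt_gammaIntegrand hx).tendsto.comp (tendsto_mul_natCeil_div_nhdsGT_zero hx.le)

theorem hasSum_rpow_mul_exp_neg_mul_geometric (hκ : -1 < κ) {t : ℝ} (ht : 0 < t) (ht1 : t ≤ 1) :
    HasSum (fun n : ℕ => t ^ (κ + 1) * exp (-t) * (((n : ℝ) + 1) ^ κ * exp (-t) ^ n))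
      (∫ x in Ioi 0, gammaIntegrand κ (t * ⌈x / t⌉₊)) := by
  refine (hasSum_integral_comp_natCeil_div (fun n : ℕ => gammaIntegrand κ (t * n)) ht
    (integrableOn_gammaIntegrand_mul_natCeil_div hκ ht ht1)).congr_fun fun n => ?_
  rw [smul_eq_mul, gammaIntegrand, Nat.cast_succ, mul_rpow ht.le (by positivity),
    rpow_add_one ht.ne', ← exp_nat_mul, show -(t * (n + 1)) = -t + n * -t by ring, exp_add]
  ring

theorem tendsto_rpow_mul_zk_exp_neg (hκ : -1 < κ) :
    Tendsto (fun t => t ^ (κ + 1) * zk κ (exp (-t))) (𝓝[>] 0) (𝓝 (Gamma (κ + 1))) := by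
  have hexp : Tendsto exp (𝓝[>] 0) (𝓝 1) := by
    simpa using tendsto_nhdsWithin_of_tendsto_nhds (continuous_exp.tendsto 0)
  have h := hexp.mul (tendsto_integral_gammaIntegrand_mul_natCeil_div hκ)
  rw [one_mul] at h
  refine h.congr' ?_
  filter_upwards [Ioc_mem_nhdsGT zero_lt_one] with t ht
  rw [← (hasSum_rpow_mul_exp_neg_mul_geometric hκ ht.1 ht.2).tsum_eq, tsum_mul_left, zk, exp_neg]
  field_simp

end

theorem tendsto_one_sub_nhdsLT_one : Tendsto (fun φ : ℝ => 1 - φ) (𝓝[<] 1) (𝓝[>] 0) := by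
  refine tendsto_nhdsWithin_iff.2
    ⟨?_, eventually_nhdsWithin_of_forall fun _ hφ => mem_Ioi.2 (sub_pos.2 hφ)⟩
  simpa using tendsto_nhdsWithin_of_tendsto_nhds ((continuous_sub_left (1 : ℝ)).tendsto 1)

theorem tendsto_neg_log_nhdsLT_one : Tendsto (fun φ => -log φ) (𝓝[<] 1) (𝓝[>] 0) := by
  refine tendsto_nhdsWithin_iff.2 ⟨?_, ?_⟩
  · have h := (continuousAt_log one_ne_zero).tendsto.neg
    rw [log_one, neg_zero] at h
    exact tendsto_nhdsWithin_of_tendsto_nhds h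
  · filter_upwards [Ioo_mem_nhdsLT zero_lt_one] with φ hφ
    exact neg_pos.2 (log_neg hφ.1 hφ.2)

theorem tendsto_sub_one_div_log_nhdsNE_one :
    Tendsto (fun φ => (φ - 1) / log φ) (𝓝[≠] 1) (𝓝 1) := by
  have h := (hasDerivAt_iff_tendsto_slope.1 (hasDerivAt_log one_ne_zero)).inv₀ (by norm_num)
  simp only [slope_def_field, log_one, sub_zero, inv_div, inv_one] at h
  exact h

theorem tendsto_zk_mul_one_sub_rpow {κ : ℝ} (hκ : -1 < κ) :
    Tendsto (fun φ => zk κ φ * (1 - φ) ^ (κ + 1)) (𝓝[<] 1) (𝓝 (Gamma (κ + 1))) := by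
  have hratio := (tendsto_sub_one_div_log_nhdsNE_one.mono_left
    (nhdsWithin_mono 1 fun _ hφ => ne_of_lt hφ)).rpow_const (p := κ + 1) (Or.inl one_ne_zero)
  have h := ((tendsto_rpow_mul_zk_exp_neg hκ).comp tendsto_neg_log_nhdsLT_one).mul hratio
  rw [one_rpow, mul_one] at h
  refine h.congr' ?_
  filter_upwards [Ioo_mem_nhdsLT zero_lt_one] with φ hφ
  have hlog : 0 < -log φ := neg_pos.2 (log_neg hφ.1 hφ.2)
  rw [Function.comp_apply, neg_neg, exp_log hφ.1, mul_right_comm, ← neg_div_neg_eq,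
    neg_sub, ← mul_rpow hlog.le (div_nonneg (by linarith [hφ.2]) hlog.le),
    mul_div_cancel₀ _ hlog.ne', mul_comm]

theorem tendsto_zk_nhdsLT_one_atTop {κ : ℝ} (hκ : -1 < κ) : Tendsto (zk κ) (𝓝[<] 1) atTop := by
  have hpow : Tendsto (fun φ : ℝ => (1 - φ) ^ (-(κ + 1))) (𝓝[<] 1) atTop :=
    (tendsto_rpow_neg_nhdsGT_zero (by linarith)).comp tendsto_one_sub_nhdsLT_one
  refine ((tendsto_zk_mul_one_sub_rpow hκ).pos_mul_atTop (Gamma_pos_of_pos (by linarith))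
    hpow).congr' ?_
  filter_upwards [self_mem_nhdsWithin] with φ hφ
  rw [rpow_neg (sub_pos.2 hφ).le, mul_assoc,
    mul_inv_cancel₀ (rpow_pos_of_pos (sub_pos.2 hφ) _).ne', mul_one]

theorem zk_convergence_and_asymptotics (κ : ℝ) (hκ : -1 < κ) :
    (∀ φ : ℝ, φ ∈ Set.Ico (0 : ℝ) 1 →
      Summable (fun n : ℕ => ((n : ℝ) + 1) ^ κ * φ ^ n)) ∧
    Tendsto (fun φ : ℝ => zk κ φ) (nhdsWithin 1 (Set.Iio 1)) atTop ∧
    Tendsto (fun φ : ℝ => zk κ φ * (1 - φ) ^ (κ + 1)) (nhdsWithin 1 (Set.Iio 1))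
      (nhds (Real.Gamma (κ + 1))) :=
  ⟨fun _ hφ => summable_succ_rpow_mul_geometric κ hφ.1 hφ.2, tendsto_zk_nhdsLT_one_atTop hκ,
    tendsto_zk_mul_one_sub_rpow hκ⟩
end

section
/- For fixed ℓ ≥ 1 and κ > -1, the sum A_ℓ(n) = Σ_{n₁+…+n_ℓ=n} Π_{y=1}^ℓ (n_y+1)^κ satisfies A_ℓ(n) / n^{(κ+1)ℓ - 1} → Γ(κ+1)^ℓ / Γ((κ+1)ℓ) as n → ∞. -/
/-!
Splitting off the first part gives `A_{ℓ+1}(n) = ∑_k (k+1)^κ A_ℓ(n-k)`, so by induction on `ℓ`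
it suffices to show: if `c, d ≥ 0` with `c k ~ A k^(a-1)` and `d k ~ B k^(b-1)` (`a, b > 0`),
then `∑_{k ≤ n} c k d (n-k) ~ A B Γ(a)Γ(b)/Γ(a+b) n^(a+b-1)`. After dividing by `n^(a+b-1)`,
the sum over `k < n` is the integral over `(0,1)` of the step function
`t ↦ c ⌊nt⌋ d (n-⌊nt⌋) / n^(a+b-2)`. It converges pointwise to `A B t^(a-1) (1-t)^(b-1)` and,
since `c k ≤ C (k+1)^(a-1)` for all `k`, is dominated by a multiple of
`t^min(a-1,0) (1-t)^min(b-1,0)`; dominated convergence yields the Beta integral.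
With `a = κ+1` and `b = (κ+1)ℓ` the Gamma factors telescope.
-/

open Real Filter Finset

/-- Sum over compositions of `n` into `ℓ` nonnegative parts of `Π (n_y+1)^κ`. -/
noncomputable def Acomp (κ : ℝ) (ℓ n : ℕ) : ℝ :=
  ∑ x ∈ Finset.Nat.antidiagonalTuple ℓ n, ∏ y : Fin ℓ, ((x y : ℝ) + 1) ^ κ

open MeasureTheory Set Topology

theorem ofReal_rpow_mul_one_sub_rpow {a b t : ℝ} (ht0 : 0 ≤ t) (ht1 : t ≤ 1) :
    ((t ^ (a - 1) * (1 - t) ^ (b - 1) : ℝ) : ℂ)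
      = (t : ℂ) ^ ((a : ℂ) - 1) * (1 - (t : ℂ)) ^ ((b : ℂ) - 1) := by
  rw [Complex.ofReal_mul, Complex.ofReal_cpow ht0, Complex.ofReal_cpow (sub_nonneg.2 ht1)]
  push_cast
  rfl

theorem intervalIntegrable_rpow_mul_one_sub_rpow {a b : ℝ} (ha : 0 < a) (hb : 0 < b) :
    IntervalIntegrable (fun t : ℝ => t ^ (a - 1) * (1 - t) ^ (b - 1)) volume 0 1 := by
  refine (Complex.betaIntegral_convergent (u := a) (v := b) (by simpa) (by simpa)).norm.congr_uIoo
    fun t ht => ?_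
  rw [uIoo_of_le zero_le_one] at ht
  dsimp only
  rw [← ofReal_rpow_mul_one_sub_rpow ht.1.le ht.2.le, Complex.norm_real,
    Real.norm_of_nonneg (mul_nonneg (rpow_nonneg ht.1.le _) (rpow_nonneg (sub_pos.2 ht.2).le _))]

theorem integral_rpow_mul_one_sub_rpow {a b : ℝ} (ha : 0 < a) (hb : 0 < b) :
    ∫ t in (0 : ℝ)..1, t ^ (a - 1) * (1 - t) ^ (b - 1) = Gamma a * Gamma b / Gamma (a + b) := by
  apply Complex.ofReal_injective
  rw [← intervalIntegral.integral_ofReal, intervalIntegral.integral_congr_uIoo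
    (g := fun t : ℝ => (t : ℂ) ^ ((a : ℂ) - 1) * (1 - (t : ℂ)) ^ ((b : ℂ) - 1)),
    ← Complex.betaIntegral, Complex.betaIntegral_eq_Gamma_mul_div _ _ (by simpa) (by simpa)]
  · push_cast
    rw [← Complex.ofReal_add, Complex.Gamma_ofReal, Complex.Gamma_ofReal, Complex.Gamma_ofReal]
  · intro t ht
    rw [uIoo_of_le zero_le_one] at ht
    exact ofReal_rpow_mul_one_sub_rpow ht.1.le ht.2.le

theorem intervalIntegral_comp_nat_floor (f : ℕ → ℝ) (n : ℕ) :
    ∫ u in (0 : ℝ)..n, f ⌊u⌋₊ = ∑ k ∈ range n, f k := by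
  have hpiece (k : ℕ) : EqOn (fun _ => f k) (fun u : ℝ => f ⌊u⌋₊) (uIoo (k : ℝ) (k + 1 : ℕ)) := by
    intro u hu
    rw [uIoo_of_le (by simp)] at hu
    simp [Nat.floor_eq_on_Ico k u ⟨hu.1.le, by exact_mod_cast hu.2⟩]
  have := intervalIntegral.sum_integral_adjacent_intervals (a := fun k : ℕ => (k : ℝ))
    (f := fun u => f ⌊u⌋₊) (μ := volume) (n := n)
    fun k _ => intervalIntegrable_const.congr_uIoo (hpiece k)
  simp only [Nat.cast_zero] at this
  rw [← this]
  refine sum_congr rfl fun k _ => ?_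
  rw [← intervalIntegral.integral_congr_uIoo (hpiece k)]
  simp

theorem intervalIntegral_comp_nat_floor_mul (f : ℕ → ℝ) {n : ℕ} (hn : n ≠ 0) :
    ∫ t in (0 : ℝ)..1, f ⌊n * t⌋₊ = (∑ k ∈ range n, f k) / n := by
  rw [intervalIntegral.integral_comp_mul_left (fun u => f ⌊u⌋₊) (Nat.cast_ne_zero.2 hn),
    mul_zero, mul_one, intervalIntegral_comp_nat_floor, smul_eq_mul, inv_mul_eq_div]

theorem tendsto_natCast_add_one_rpow_div_rpow (p : ℝ) :
    Tendsto (fun n : ℕ => ((n : ℝ) + 1) ^ p / (n : ℝ) ^ p) atTop (𝓝 1) := by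
  have h := ((tendsto_natCast_div_add_atTop (1 : ℝ)).rpow_const (p := p)
    (Or.inl one_ne_zero)).inv₀ (by simp)
  rw [one_rpow, inv_one] at h
  refine h.congr fun n => ?_
  rw [div_rpow (by positivity) (by positivity), inv_div]

theorem exists_le_mul_add_one_rpow {c : ℕ → ℝ} {p A : ℝ}
    (hc : Tendsto (fun k : ℕ => c k / (k : ℝ) ^ p) atTop (𝓝 A)) :
    ∃ C, ∀ k : ℕ, c k ≤ C * ((k : ℝ) + 1) ^ p := by
  have hlim : Tendsto (fun k : ℕ => c k / ((k : ℝ) + 1) ^ p) atTop (𝓝 A) := by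
    have h := hc.div (tendsto_natCast_add_one_rpow_div_rpow p) one_ne_zero
    rw [div_one] at h
    refine h.congr' ?_
    filter_upwards [eventually_ne_atTop 0] with k hk
    have : (k : ℝ) ^ p ≠ 0 := (rpow_pos_of_pos (by positivity) p).ne'
    simp only [Pi.div_apply]
    field_simp
  obtain ⟨C, hC⟩ := hlim.bddAbove_range
  exact ⟨C, fun k => (div_le_iff₀ (by positivity)).1 (hC ⟨k, rfl⟩)⟩

theorem rpow_le_two_rpow_mul_rpow {s x p : ℝ} (hs : 0 < s) (hsx : s ≤ x) (hx : x ≤ 2) :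
    x ^ p ≤ 2 ^ max p 0 * s ^ min p 0 := by
  rcases le_total 0 p with hp | hp
  · rw [max_eq_left hp, min_eq_right hp, rpow_zero, mul_one]
    exact rpow_le_rpow (hs.le.trans hsx) hx hp
  · rw [max_eq_right hp, min_eq_left hp, rpow_zero, one_mul]
    exact rpow_le_rpow_of_nonpos hs hsx hp

theorem div_rpow_le_of_le_mul_add_one_rpow {c : ℕ → ℝ} {C p s : ℝ} (hC0 : 0 ≤ C)
    (hC : ∀ k : ℕ, c k ≤ C * ((k : ℝ) + 1) ^ p) {n k : ℕ} (hn : n ≠ 0) (hs : 0 < s)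
    (hsk : s * n ≤ k + 1) (hkn : k ≤ n) :
    c k / (n : ℝ) ^ p ≤ C * (2 ^ max p 0 * s ^ min p 0) := by
  have hn' : (0 : ℝ) < n := by positivity
  have hk2 : ((k : ℝ) + 1) / n ≤ 2 := by
    rw [div_le_iff₀ hn']
    have : (1 : ℝ) ≤ n := by exact_mod_cast Nat.one_le_iff_ne_zero.2 hn
    have : (k : ℝ) ≤ n := by exact_mod_cast hkn
    linarith
  calc c k / (n : ℝ) ^ p ≤ C * ((k : ℝ) + 1) ^ p / (n : ℝ) ^ p := by gcongr; exact hC k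
    _ = C * (((k : ℝ) + 1) / n) ^ p := by rw [div_rpow (by positivity) hn'.le, mul_div_assoc]
    _ ≤ C * (2 ^ max p 0 * s ^ min p 0) := by
      gcongr
      exact rpow_le_two_rpow_mul_rpow hs ((le_div_iff₀ hn').2 hsk) hk2

theorem tendsto_comp_div_rpow {c : ℕ → ℝ} {p A s : ℝ}
    (hc : Tendsto (fun k : ℕ => c k / (k : ℝ) ^ p) atTop (𝓝 A)) {k : ℕ → ℕ} (hs : 0 < s)
    (hk : Tendsto (fun n : ℕ => (k n : ℝ) / n) atTop (𝓝 s)) :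
    Tendsto (fun n : ℕ => c (k n) / (n : ℝ) ^ p) atTop (𝓝 (A * s ^ p)) := by
  have hk_atTop : Tendsto k atTop atTop := by
    rw [← tendsto_natCast_atTop_iff (R := ℝ)]
    refine (hk.pos_mul_atTop hs tendsto_natCast_atTop_atTop).congr' ?_
    filter_upwards [eventually_ne_atTop 0] with n hn
    field_simp
  refine ((hc.comp hk_atTop).mul (hk.rpow_const (Or.inl hs.ne'))).congr' ?_
  filter_upwards [hk_atTop.eventually_ne_atTop 0] with n hkn
  have : ((k n : ℕ) : ℝ) ^ p ≠ 0 := (rpow_pos_of_pos (by positivity) p).ne'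
  rw [Function.comp_apply, div_rpow (by positivity) (by positivity)]
  field_simp

theorem Finset.Nat.sum_antidiagonalTuple_succ {M : Type*} [AddCommMonoid M] (k n : ℕ)
    (f : (Fin (k + 1) → ℕ) → M) :
    ∑ x ∈ Nat.antidiagonalTuple (k + 1) n, f x
      = ∑ p ∈ antidiagonal n, ∑ x ∈ Nat.antidiagonalTuple k p.2, f (Fin.cons p.1 x) := by
  rw [Finset.sum_sigma']
  refine Finset.sum_bij' (fun x _ => ⟨(x 0, ∑ i, Fin.tail x i), Fin.tail x⟩)
    (fun p _ => Fin.cons p.1.1 p.2) ?_ ?_ ?_ ?_ ?_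
  · intro x hx
    rw [Nat.mem_antidiagonalTuple, Fin.sum_univ_succ] at hx
    simp [Nat.mem_antidiagonalTuple, Fin.tail, hx]
  · rintro ⟨⟨i, j⟩, x⟩ hp
    simp_all [Nat.mem_antidiagonalTuple, Fin.sum_univ_succ]
  · exact fun x _ => Fin.cons_self_tail x
  · rintro ⟨⟨i, j⟩, x⟩ hp
    simp_all [Nat.mem_antidiagonalTuple]
  · simp

noncomputable def convStep (c d : ℕ → ℝ) (p q : ℝ) (n : ℕ) (t : ℝ) : ℝ :=
  c ⌊n * t⌋₊ / (n : ℝ) ^ p * (d (n - ⌊n * t⌋₊) / (n : ℝ) ^ q)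

section convStep

variable {c d : ℕ → ℝ}

theorem integral_convStep (p q : ℝ) {n : ℕ} (hn : n ≠ 0) :
    ∫ t in (0 : ℝ)..1, convStep c d p q n t
      = (∑ k ∈ range n, c k * d (n - k)) / (n : ℝ) ^ (p + q + 1) := by
  have hn' : (0 : ℝ) < n := by positivity
  unfold convStep
  rw [intervalIntegral_comp_nat_floor_mul
    (fun k => c k / (n : ℝ) ^ p * (d (n - k) / (n : ℝ) ^ q)) hn,
    rpow_add hn', rpow_add hn', rpow_one, sum_div, sum_div]
  refine sum_congr rfl fun k _ => ?_
  ring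

theorem measurable_convStep (p q : ℝ) (n : ℕ) : Measurable (convStep c d p q n) := by
  unfold convStep
  fun_prop

theorem convStep_nonneg (hc0 : ∀ k, 0 ≤ c k) (hd0 : ∀ k, 0 ≤ d k) (p q : ℝ) (n : ℕ) (t : ℝ) :
    0 ≤ convStep c d p q n t := by
  unfold convStep
  have := hc0 ⌊n * t⌋₊
  have := hd0 (n - ⌊n * t⌋₊)
  positivity

theorem convStep_le {Cc Cd p q : ℝ} (hd0 : ∀ k, 0 ≤ d k) (hCc0 : 0 ≤ Cc) (hCd0 : 0 ≤ Cd)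
    (hCc : ∀ k : ℕ, c k ≤ Cc * ((k : ℝ) + 1) ^ p) (hCd : ∀ k : ℕ, d k ≤ Cd * ((k : ℝ) + 1) ^ q)
    {n : ℕ} (hn : n ≠ 0) {t : ℝ} (ht : t ∈ Ioo (0 : ℝ) 1) :
    convStep c d p q n t
      ≤ Cc * (2 ^ max p 0 * t ^ min p 0) * (Cd * (2 ^ max q 0 * (1 - t) ^ min q 0)) := by
  have hfloor : (⌊n * t⌋₊ : ℝ) ≤ n * t := Nat.floor_le (by positivity [ht.1.le])
  have hfloor_le : ⌊n * t⌋₊ ≤ n := Nat.floor_le_of_le (mul_le_of_le_one_right n.cast_nonneg ht.2.le)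
  apply mul_le_mul
  · refine div_rpow_le_of_le_mul_add_one_rpow hCc0 hCc hn ht.1 ?_ hfloor_le
    linarith [Nat.lt_floor_add_one ((n : ℝ) * t)]
  · refine div_rpow_le_of_le_mul_add_one_rpow hCd0 hCd hn (sub_pos.2 ht.2) ?_ (Nat.sub_le _ _)
    rw [Nat.cast_sub hfloor_le]
    linarith
  · exact div_nonneg (hd0 _) (by positivity)
  · exact mul_nonneg hCc0 (by positivity [ht.1.le])

theorem tendsto_convStep {p q A B : ℝ}
    (hc : Tendsto (fun k : ℕ => c k / (k : ℝ) ^ p) atTop (𝓝 A))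
    (hd : Tendsto (fun k : ℕ => d k / (k : ℝ) ^ q) atTop (𝓝 B)) {t : ℝ} (ht : t ∈ Ioo (0 : ℝ) 1) :
    Tendsto (fun n => convStep c d p q n t) atTop (𝓝 (A * t ^ p * (B * (1 - t) ^ q))) := by
  have hfloor : Tendsto (fun n : ℕ => (⌊n * t⌋₊ : ℝ) / n) atTop (𝓝 t) := by
    simpa only [Function.comp_def, mul_comm] using
      (tendsto_nat_floor_mul_div_atTop ht.1.le).comp tendsto_natCast_atTop_atTop
  have hsub : Tendsto (fun n : ℕ => ((n - ⌊n * t⌋₊ : ℕ) : ℝ) / n) atTop (𝓝 (1 - t)) := by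
    refine (tendsto_const_nhds.sub hfloor).congr' ?_
    filter_upwards [eventually_ne_atTop 0] with n hn
    rw [Nat.cast_sub (Nat.floor_le_of_le (mul_le_of_le_one_right n.cast_nonneg ht.2.le)),
      sub_div, div_self (by positivity)]
  exact (tendsto_comp_div_rpow hc ht.1 hfloor).mul (tendsto_comp_div_rpow hd (sub_pos.2 ht.2) hsub)

theorem tendsto_integral_convStep {p q A B : ℝ} (hp : -1 < p) (hq : -1 < q)
    (hc0 : ∀ k, 0 ≤ c k) (hd0 : ∀ k, 0 ≤ d k)
    (hc : Tendsto (fun k : ℕ => c k / (k : ℝ) ^ p) atTop (𝓝 A))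
    (hd : Tendsto (fun k : ℕ => d k / (k : ℝ) ^ q) atTop (𝓝 B)) :
    Tendsto (fun n => ∫ t in (0 : ℝ)..1, convStep c d p q n t) atTop
      (𝓝 (A * B * ∫ t in (0 : ℝ)..1, t ^ p * (1 - t) ^ q)) := by
  obtain ⟨Cc, hCc⟩ := exists_le_mul_add_one_rpow hc
  obtain ⟨Cd, hCd⟩ := exists_le_mul_add_one_rpow hd
  have hCc0 : 0 ≤ Cc := by simpa using (hc0 0).trans (hCc 0)
  have hCd0 : 0 ≤ Cd := by simpa using (hd0 0).trans (hCd 0)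
  have hbound_int : IntervalIntegrable
      (fun t : ℝ => Cc * 2 ^ max p 0 * (Cd * 2 ^ max q 0) * (t ^ min p 0 * (1 - t) ^ min q 0))
      volume 0 1 := by
    refine IntervalIntegrable.const_mul ?_ _
    simpa using intervalIntegrable_rpow_mul_one_sub_rpow (a := min p 0 + 1) (b := min q 0 + 1)
      (by linarith [lt_min hp neg_one_lt_zero]) (by linarith [lt_min hq neg_one_lt_zero])
  have hlimit : A * B * ∫ t in (0 : ℝ)..1, t ^ p * (1 - t) ^ q
      = ∫ t in (0 : ℝ)..1, A * t ^ p * (B * (1 - t) ^ q) := by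
    rw [← intervalIntegral.integral_const_mul]
    congr 1 with t
    ring
  rw [hlimit]
  refine intervalIntegral.tendsto_integral_filter_of_dominated_convergence _
    (Eventually.of_forall fun n => (measurable_convStep p q n).aestronglyMeasurable)
    ?_ hbound_int ?_
  · filter_upwards [eventually_ne_atTop 0] with n hn
    filter_upwards [volume.ae_ne 1] with t ht1 ht
    rw [uIoc_of_le zero_le_one] at ht
    rw [Real.norm_of_nonneg (convStep_nonneg hc0 hd0 p q n t)]
    exact (convStep_le hd0 hCc0 hCd0 hCc hCd hn ⟨ht.1, ht.2.lt_of_ne ht1⟩).trans_eq (by ring)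
  · filter_upwards [volume.ae_ne 1] with t ht1 ht
    rw [uIoc_of_le zero_le_one] at ht
    exact tendsto_convStep hc hd ⟨ht.1, ht.2.lt_of_ne ht1⟩

theorem tendsto_sum_range_mul_sub_div_rpow {a b A B : ℝ} (ha : 0 < a) (hb : 0 < b)
    (hc0 : ∀ k, 0 ≤ c k) (hd0 : ∀ k, 0 ≤ d k)
    (hc : Tendsto (fun k : ℕ => c k / (k : ℝ) ^ (a - 1)) atTop (𝓝 A))
    (hd : Tendsto (fun k : ℕ => d k / (k : ℝ) ^ (b - 1)) atTop (𝓝 B)) :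
    Tendsto (fun n : ℕ => (∑ k ∈ range (n + 1), c k * d (n - k)) / (n : ℝ) ^ (a + b - 1)) atTop
      (𝓝 (A * B * (Gamma a * Gamma b / Gamma (a + b)))) := by
  have hint := tendsto_integral_convStep (by linarith) (by linarith) hc0 hd0 hc hd
  rw [integral_rpow_mul_one_sub_rpow ha hb] at hint
  have hlast : Tendsto (fun n : ℕ => c n * d 0 / (n : ℝ) ^ (a + b - 1)) atTop (𝓝 0) := by
    have h := hc.mul ((tendsto_const_nhds (x := d 0)).div_atTop
      ((tendsto_rpow_atTop hb).comp tendsto_natCast_atTop_atTop))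
    rw [mul_zero] at h
    refine h.congr' ?_
    filter_upwards [eventually_ne_atTop 0] with n hn
    have hn' : (0 : ℝ) < n := by positivity
    rw [Function.comp_apply, show a + b - 1 = a - 1 + b by ring, rpow_add hn']
    field_simp
  rw [← add_zero (A * B * _)]
  refine (hint.add hlast).congr' ?_
  filter_upwards [eventually_ne_atTop 0] with n hn
  rw [sum_range_succ, add_div, integral_convStep _ _ hn, Nat.sub_self,
    show a - 1 + (b - 1) + 1 = a + b - 1 by ring]

end convStep

theorem Acomp_one (κ : ℝ) (n : ℕ) : Acomp κ 1 n = ((n : ℝ) + 1) ^ κ := by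
  simp [Acomp]

theorem Acomp_succ (κ : ℝ) (ℓ n : ℕ) :
    Acomp κ (ℓ + 1) n = ∑ k ∈ range (n + 1), ((k : ℝ) + 1) ^ κ * Acomp κ ℓ (n - k) := by
  rw [Acomp, Finset.Nat.sum_antidiagonalTuple_succ, Nat.sum_antidiagonal_eq_sum_range_succ_mk]
  simp [Acomp, Fin.prod_univ_succ, mul_sum]

theorem Acomp_nonneg (κ : ℝ) (ℓ n : ℕ) : 0 ≤ Acomp κ ℓ n :=
  sum_nonneg fun _ _ => prod_nonneg fun _ _ => by positivity

theorem Acomp_asymptotics (κ : ℝ) (hκ : -1 < κ) (ℓ : ℕ) (hℓ : 1 ≤ ℓ) :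
    Tendsto (fun n : ℕ => Acomp κ ℓ n / (n : ℝ) ^ ((κ + 1) * ℓ - 1)) atTop
      (nhds (Real.Gamma (κ + 1) ^ ℓ / Real.Gamma ((κ + 1) * ℓ))) := by
  have hκ1 : 0 < κ + 1 := by linarith
  induction ℓ, hℓ using Nat.le_induction with
  | base =>
    simpa [Acomp_one, (Gamma_pos_of_pos hκ1).ne'] using tendsto_natCast_add_one_rpow_div_rpow κ
  | succ ℓ hℓ ih =>
    have hℓκ : 0 < (κ + 1) * ℓ := mul_pos hκ1 (by exact_mod_cast hℓ)
    have h := tendsto_sum_range_mul_sub_div_rpow (c := fun k => ((k : ℝ) + 1) ^ κ) hκ1 hℓκ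
      (fun k => by positivity) (Acomp_nonneg κ ℓ)
      (by simpa using tendsto_natCast_add_one_rpow_div_rpow κ) ih
    have hexp : κ + 1 + (κ + 1) * ℓ = (κ + 1) * ↑(ℓ + 1) := by push_cast; ring
    rw [hexp, one_mul] at h
    simp_rw [Acomp_succ]
    convert h using 2
    field_simp [(Gamma_pos_of_pos hℓκ).ne']
    ring
end

section
/- Size-biased marginal formula: let π_{L,N} be the product-form canonical measure on configurations η ∈ ℕ₀^L with Σ η_x = N, π_{L,N}[η] = Z_{L,N}^{-1} Π_x w_L(η_x), and let η̃ be the size-biased reordering (sites sampled without replacement with probability proportional to remaining occupation). Then for any m ≤ L and n₁,…,n_m ≥ 0 with n₁+…+n_m ≤ N, π_{L,N}[η̃₁ = n₁, …, η̃_m = n_m] = [Π_{j=1}^m ((L-j+1)/(N - n₁ - … - n_{j-1})) · n_j w_L(n_j)] · Z_{L-m, N-n₁-…-n_m} / Z_{L,N}. -/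
open Real Finset

/-- Canonical partition function `Z_{L,N} = Σ_{η : Σηₓ = N} Π_x w_L(η_x)`. -/
noncomputable def Zpart (wL : ℕ → ℝ) (L N : ℕ) : ℝ :=
  ∑ η ∈ Finset.Nat.antidiagonalTuple L N, ∏ x : Fin L, wL (η x)

/-- Probability under the canonical measure `π_{L,N}` that the size-biased
reordering starts with the values `n 0, …, n (m-1)`: we sum over configurations
`η` with `Σηₓ = N` (weighted by `π_{L,N}[η]`) and over all injective tuples of
sites carrying exactly those occupation numbers, with the sequential
size-biased sampling probabilities. -/
noncomputable def sbProb (wL : ℕ → ℝ) (L N m : ℕ) (n : Fin m → ℕ) : ℝ :=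
  (∑ η ∈ Finset.Nat.antidiagonalTuple L N, (∏ x : Fin L, wL (η x)) *
    ∑ σ ∈ Finset.univ.filter
        (fun σ : Fin m → Fin L => Function.Injective σ ∧ ∀ j, η (σ j) = n j),
      ∏ j : Fin m, (n j : ℝ) / ((N : ℝ) - ∑ i ∈ Finset.Iio j, (n i : ℝ)))
  / Zpart wL L N

lemma exists_equiv (L m : ℕ) (σ : Fin m → Fin L) (hσ : Function.Injective σ) :
    ∃ E : Fin L ≃ (Fin m ⊕ Fin (L - m)), ∀ j, E.symm (Sum.inl j) = σ j := by
  classical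
  let e1 : {x : Fin L // x ∈ Set.range σ} ≃ Fin m := (Equiv.ofInjective σ hσ).symm
  have hcard : Fintype.card {x : Fin L // ¬ x ∈ Set.range σ} = L - m := by
    have h1 : Fintype.card {x : Fin L // x ∈ Set.range σ} = m := by
      rw [Fintype.card_congr e1, Fintype.card_fin]
    rw [Fintype.card_subtype_compl, Fintype.card_fin, h1]
  refine ⟨(Equiv.sumCompl (· ∈ Set.range σ)).symm.trans
    (Equiv.sumCongr e1 (Fintype.equivFinOfCardEq hcard)), fun j => ?_⟩
  simp [e1, Equiv.sumCompl_apply_inl, Equiv.ofInjective_apply]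

lemma inner_sum_eq (wL : ℕ → ℝ) (L N m : ℕ)
    (n : Fin m → ℕ) (hn : ∑ j, n j ≤ N)
    (σ : Fin m → Fin L) (hσ : Function.Injective σ) :
    ∑ η ∈ (Finset.Nat.antidiagonalTuple L N).filter (fun η => ∀ j, η (σ j) = n j),
        ∏ x : Fin L, wL (η x)
      = (∏ j, wL (n j)) * Zpart wL (L - m) (N - ∑ j, n j) := by
  classical
  obtain ⟨E, hE⟩ := exists_equiv L m σ hσ
  rw [Zpart, Finset.mul_sum]
  refine Finset.sum_nbij' (i := fun η => fun i => η (E.symm (Sum.inr i)))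
    (j := fun ζ => fun x => Sum.elim n ζ (E x)) ?_ ?_ ?_ ?_ ?_
  · intro η hη
    simp only [Finset.mem_filter, Finset.Nat.mem_antidiagonalTuple] at hη ⊢
    obtain ⟨hsum, hval⟩ := hη
    have h1 : ∑ y : Fin m ⊕ Fin (L - m), η (E.symm y) = N := by
      rw [Equiv.sum_comp E.symm (fun x => η x), hsum]
    rw [Fintype.sum_sum_type] at h1
    have h2 : ∀ j, η (E.symm (Sum.inl j)) = n j := fun j => by rw [hE j]; exact hval j
    rw [Finset.sum_congr rfl (fun j _ => h2 j)] at h1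
    have : Finset.univ.sum n = ∑ j, n j := rfl
    omega
  · intro ζ hζ
    simp only [Finset.Nat.mem_antidiagonalTuple] at hζ
    simp only [Finset.mem_filter, Finset.Nat.mem_antidiagonalTuple]
    constructor
    · have : ∑ x : Fin L, Sum.elim n ζ (E x) = ∑ y : Fin m ⊕ Fin (L - m), Sum.elim n ζ y :=
        Equiv.sum_comp E (Sum.elim n ζ)
      rw [this, Fintype.sum_sum_type]
      simp only [Sum.elim_inl, Sum.elim_inr]
      omega
    · intro j
      have : E (σ j) = Sum.inl j := by rw [← hE j, Equiv.apply_symm_apply]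
      rw [this]; rfl
  · intro η hη
    simp only [Finset.mem_filter] at hη
    funext x
    show Sum.elim n (fun i => η (E.symm (Sum.inr i))) (E x) = η x
    rcases h : E x with j | i
    · have hx : x = E.symm (Sum.inl j) := by rw [← h, Equiv.symm_apply_apply]
      simp only [Sum.elim_inl]; rw [hx, hE j]; exact (hη.2 j).symm
    · have hx : x = E.symm (Sum.inr i) := by rw [← h, Equiv.symm_apply_apply]
      simp only [Sum.elim_inr]; rw [hx]
  · intro ζ hζ
    funext i
    show Sum.elim n ζ (E (E.symm (Sum.inr i))) = ζ i
    rw [Equiv.apply_symm_apply, Sum.elim_inr]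
  · intro η hη
    simp only [Finset.mem_filter] at hη
    have : ∏ x : Fin L, wL (η x) = ∏ y : Fin m ⊕ Fin (L - m), wL (η (E.symm y)) :=
      (Equiv.prod_comp E.symm (fun x => wL (η x))).symm
    rw [this, Fintype.prod_sum_type]
    congr 1
    exact Finset.prod_congr rfl fun j _ => by rw [hE j, hη.2 j]

theorem size_biased_marginal_formula (wL : ℕ → ℝ) (hw : ∀ k, 0 < wL k)
    (L N m : ℕ) (hm : m ≤ L) (hN : 1 ≤ N)
    (n : Fin m → ℕ) (hn : ∑ j, n j ≤ N) :
    sbProb wL L N m n =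
      (∏ j : Fin m, ((L : ℝ) - (j : ℕ)) / ((N : ℝ) - ∑ i ∈ Finset.Iio j, (n i : ℝ))
          * (n j : ℝ) * wL (n j))
        * Zpart wL (L - m) (N - ∑ j, n j) / Zpart wL L N := by
  classical
  set C : ℝ := ∏ j : Fin m, (n j : ℝ) / ((N : ℝ) - ∑ i ∈ Finset.Iio j, (n i : ℝ)) with hC
  set W : ℝ := ∏ j, wL (n j) with hW
  set Z' : ℝ := Zpart wL (L - m) (N - ∑ j, n j) with hZ'
  -- counting lemma
  have h2 : ∑ η ∈ Finset.Nat.antidiagonalTuple L N, (∏ x : Fin L, wL (η x)) *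
      ((Finset.univ.filter
        (fun σ : Fin m → Fin L => Function.Injective σ ∧ ∀ j, η (σ j) = n j)).card : ℝ)
      = (L.descFactorial m : ℝ) * (W * Z') := by
    calc
      _ = ∑ η ∈ Finset.Nat.antidiagonalTuple L N,
            ∑ σ ∈ Finset.univ.filter
              (fun σ : Fin m → Fin L => Function.Injective σ ∧ ∀ j, η (σ j) = n j),
            ∏ x : Fin L, wL (η x) := by
          refine Finset.sum_congr rfl fun η _ => ?_
          rw [Finset.sum_const, nsmul_eq_mul, mul_comm]
      _ = ∑ η ∈ Finset.Nat.antidiagonalTuple L N, ∑ σ : Fin m → Fin L,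
            if Function.Injective σ ∧ (∀ j, η (σ j) = n j) then ∏ x : Fin L, wL (η x)
            else 0 := by
          exact Finset.sum_congr rfl fun η _ => Finset.sum_filter _ _
      _ = ∑ σ : Fin m → Fin L, ∑ η ∈ Finset.Nat.antidiagonalTuple L N,
            if Function.Injective σ ∧ (∀ j, η (σ j) = n j) then ∏ x : Fin L, wL (η x)
            else 0 := Finset.sum_comm
      _ = ∑ σ : Fin m → Fin L, if Function.Injective σ then W * Z' else 0 := by
          refine Finset.sum_congr rfl fun σ _ => ?_
          by_cases hσ : Function.Injective σ
          · simp only [hσ, true_and, if_true]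
            rw [← Finset.sum_filter]
            exact inner_sum_eq wL L N m n hn σ hσ
          · simp [hσ]
      _ = ((Finset.univ.filter
            (fun σ : Fin m → Fin L => Function.Injective σ)).card : ℝ) * (W * Z') := by
          rw [← Finset.sum_filter, Finset.sum_const, nsmul_eq_mul]
      _ = (L.descFactorial m : ℝ) * (W * Z') := by
          congr 2
          rw [← Fintype.card_subtype,
            Fintype.card_congr (Equiv.subtypeInjectiveEquivEmbedding (Fin m) (Fin L)),
            Fintype.card_embedding_eq, Fintype.card_fin, Fintype.card_fin]
  have hD : ∏ j : Fin m, ((L : ℝ) - (j : ℕ)) = (L.descFactorial m : ℝ) := by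
    rw [Nat.descFactorial_eq_prod_range, Nat.cast_prod,
      Fin.prod_univ_eq_prod_range (fun j => (L : ℝ) - (j : ℕ))]
    refine Finset.prod_congr rfl fun j hj => ?_
    rw [Finset.mem_range] at hj
    rw [Nat.cast_sub (by omega)]
  have hprod : (∏ j : Fin m, ((L : ℝ) - (j : ℕ)) / ((N : ℝ) - ∑ i ∈ Finset.Iio j, (n i : ℝ))
        * (n j : ℝ) * wL (n j)) = C * ((L.descFactorial m : ℝ) * W) := by
    rw [← hD, hC, hW, ← Finset.prod_mul_distrib, ← Finset.prod_mul_distrib]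
    refine Finset.prod_congr rfl fun j _ => ?_
    ring
  have key : (∑ η ∈ Finset.Nat.antidiagonalTuple L N, (∏ x : Fin L, wL (η x)) *
      ∑ σ ∈ Finset.univ.filter
          (fun σ : Fin m → Fin L => Function.Injective σ ∧ ∀ j, η (σ j) = n j),
        ∏ j : Fin m, (n j : ℝ) / ((N : ℝ) - ∑ i ∈ Finset.Iio j, (n i : ℝ)))
      = C * ((L.descFactorial m : ℝ) * (W * Z')) := by
    rw [← h2, Finset.mul_sum]
    refine Finset.sum_congr rfl fun η _ => ?_
    rw [Finset.sum_const, nsmul_eq_mul, ← hC]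
    ring
  rw [sbProb, key, hprod]
  ring
end

section
/- Stationary weights of curl-free lattice gases: if c(n,m) > 0 for n ≥ 1, m ≥ 0 satisfies the curl-free condition c(n,m-1)/c(m,n-1) = (c(n,0)/c(1,n-1))·(c(1,m-1)/c(m,0)) for all n,m ≥ 1, then the weights w(0) = 1, w(n) = Π_{m=1}^n c(1,m-1)/c(m,0) satisfy the detailed-balance-type relation w(n) w(m) c(n+1, m) = w(n+1) w(m+1) · (c(m+1, n)·c(n+1,0)·c(1,m)) / (c(1,n)·c(m+1,0)) for all n, m ≥ 0 — equivalently, w(n+1) w(m) c(m+1, n) · c(1,n)/c(n+1,0) is symmetric under exchanging the roles induced by a particle jump. -/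
open Finset

/-- Stationary weights `w(0) = 1`, `w(n) = Π_{m=1}^n c(1,m-1)/c(m,0)`. -/
noncomputable def statW (c : ℕ → ℕ → ℝ) (n : ℕ) : ℝ :=
  ∏ m ∈ Finset.range n, c 1 m / c (m + 1) 0

/-! Writing `n = a + 1`, `m = b + 1`, the recursion `w(a+1) = w(a) c(1,a)/c(a+1,0)` turns the
second identity into the symmetry of `c(a+1,b) c(1,a) / c(a+1,0)` in `a` and `b`, which is the
curl-free condition with its denominators cleared. -/

section

variable (c : ℕ → ℕ → ℝ)

theorem statW_succ (n : ℕ) : statW c (n + 1) = statW c n * (c 1 n / c (n + 1) 0) :=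
  prod_range_succ _ n

theorem statW_succ_mul {n : ℕ} (h : c (n + 1) 0 ≠ 0) :
    statW c (n + 1) * c (n + 1) 0 = statW c n * c 1 n := by
  rw [statW_succ, mul_assoc, div_mul_cancel₀ _ h]

variable {c}

theorem curl_free_cross_mul {a b : ℕ} (hba : c (b + 1) a ≠ 0) (h1a : c 1 a ≠ 0)
    (hb0 : c (b + 1) 0 ≠ 0)
    (hcurl : c (a + 1) b / c (b + 1) a = c (a + 1) 0 / c 1 a * (c 1 b / c (b + 1) 0)) :
    c (a + 1) b * c 1 a * c (b + 1) 0 = c (b + 1) a * c 1 b * c (a + 1) 0 := by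
  rw [div_eq_iff hba] at hcurl
  rw [hcurl]
  field_simp

theorem mul_statW_succ_mul_statW_comm {a b : ℕ} (ha0 : c (a + 1) 0 ≠ 0) (hb0 : c (b + 1) 0 ≠ 0)
    (hcross : c (a + 1) b * c 1 a * c (b + 1) 0 = c (b + 1) a * c 1 b * c (a + 1) 0) :
    c (a + 1) b * statW c (a + 1) * statW c b = c (b + 1) a * statW c (b + 1) * statW c a := by
  rw [statW_succ, statW_succ]
  field_simp
  linear_combination statW c a * statW c b * hcross

end

theorem curl_free_stationary_weights (c : ℕ → ℕ → ℝ)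
    (hc : ∀ n m : ℕ, 1 ≤ n → 0 < c n m)
    (hcurl : ∀ n m : ℕ, 1 ≤ n → 1 ≤ m →
      c n (m - 1) / c m (n - 1) = c n 0 / c 1 (n - 1) * (c 1 (m - 1) / c m 0)) :
    (∀ n : ℕ, 1 ≤ n → statW c n * c n 0 = statW c (n - 1) * c 1 (n - 1)) ∧
    (∀ n m : ℕ, 1 ≤ n → 1 ≤ m →
      c n (m - 1) * statW c n * statW c (m - 1)
        = c m (n - 1) * statW c m * statW c (n - 1)) := by
  have hc0 : ∀ a b : ℕ, c (a + 1) b ≠ 0 := fun a b => (hc (a + 1) b a.succ_pos).ne'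
  constructor
  · intro n hn
    obtain ⟨a, rfl⟩ := Nat.exists_eq_add_of_le' hn
    exact statW_succ_mul c (hc0 a 0)
  · intro n m hn hm
    obtain ⟨a, rfl⟩ := Nat.exists_eq_add_of_le' hn
    obtain ⟨b, rfl⟩ := Nat.exists_eq_add_of_le' hm
    have hcross := curl_free_cross_mul (hc0 b a) (hc0 0 a) (hc0 b 0)
      (hcurl (a + 1) (b + 1) a.succ_pos b.succ_pos)
    exact mul_statW_succ_mul_statW_comm (hc0 a 0) (hc0 b 0) hcross
end
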